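/- arXiv:2211.08124 — 2 statements merged into one kernel-verified Lean document; each statement's English description precedes it below -/
import Mathlib

section
/- Let q be a power of a prime p, let v, w ∈ 𝔽_q^n, and let t ∈ {1,…,n}. Assume that s_{j·p^k}^{(n)}(v) = s_{j·p^k}^{(n)}(w) holds for all j ∈ {1,…,q−1} and all k ∈ {0, 1, …, ⌊log_p t⌋}. Then: (i) for every a ∈ 𝔽_q^×, the number of indices i with v_i = a is congruent modulo p^{⌊log_p t⌋ + 1} to the number of indices i with w_i = a; and (ii) s_t^{(n)}(v) = s_t^{(n)}(w). -/
open Polynomial Finset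

/-- The value of the `k`-th elementary symmetric polynomial in `n` variables on a
vector `v ∈ F^n` (it is `0` for `k > n` and `1` for `k = 0`). -/
def esymmVal {F : Type*} [CommSemiring F] (n k : ℕ) (v : Fin n → F) : F :=
  ∑ t ∈ Finset.powersetCard k (Finset.univ : Finset (Fin n)), ∏ i ∈ t, v i

section Aux

variable {F : Type*} [Field F]

lemma coeff_prod_one_add {ι : Type*} (s : Finset ι) (u : ι → F) (k : ℕ) :
    (∏ i ∈ s, (1 + Polynomial.C (u i) * Polynomial.X)).coeff k
      = ∑ t ∈ Finset.powersetCard k s, ∏ i ∈ t, u i := by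
  classical
  have h1 : ∏ i ∈ s, (1 + Polynomial.C (u i) * Polynomial.X)
      = ∑ t ∈ s.powerset, Polynomial.C (∏ i ∈ t, u i) * Polynomial.X ^ t.card := by
    have := Finset.prod_add (fun i => Polynomial.C (u i) * Polynomial.X)
      (fun _ => (1 : F[X])) s
    simp only [Finset.prod_const_one, mul_one] at this
    rw [show (fun i => (1 : F[X]) + Polynomial.C (u i) * Polynomial.X)
        = fun i => Polynomial.C (u i) * Polynomial.X + 1 from funext fun i => add_comm _ _] at *
    rw [this]
    refine Finset.sum_congr rfl fun t _ => ?_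
    rw [Finset.prod_mul_distrib, Finset.prod_const, ← map_prod]
  rw [h1, Polynomial.finset_sum_coeff]
  rw [Finset.powersetCard_eq_filter, Finset.sum_filter]
  refine Finset.sum_congr rfl fun t _ => ?_
  rw [Polynomial.coeff_C_mul, Polynomial.coeff_X_pow]
  by_cases h : t.card = k
  · simp [h]
  · rw [if_neg (fun hh => h hh.symm), if_neg h, mul_zero]

variable [Fintype F]

noncomputable def Qpoly (e : F → ℕ) : F[X] := ∏ a : F, (1 + Polynomial.C a * Polynomial.X) ^ (e a)

lemma Qpoly_coeff_zero (e : F → ℕ) : (Qpoly e).coeff 0 = 1 := by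
  rw [Polynomial.coeff_zero_eq_eval_zero, Qpoly]
  simp [Polynomial.eval_prod]

lemma prod_eq_Qpoly [DecidableEq F] {n : ℕ} (v : Fin n → F) :
    ∏ i, (1 + Polynomial.C (v i) * Polynomial.X)
      = Qpoly (fun a => (Finset.univ.filter fun i => v i = a).card) := by
  rw [Qpoly, ← Finset.prod_fiberwise_of_maps_to (g := v) (fun i _ => Finset.mem_univ (v i))
    (fun i => 1 + Polynomial.C (v i) * Polynomial.X)]
  refine Finset.prod_congr rfl fun a _ => ?_
  rw [← Finset.prod_const]
  refine Finset.prod_congr rfl fun i hi => ?_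
  simp only [Finset.mem_filter] at hi
  rw [hi.2]

lemma Qpoly_zero_adjust [DecidableEq F] (e : F → ℕ) :
    Qpoly e = Qpoly (fun a => if a = 0 then 0 else e a) := by
  unfold Qpoly
  refine Finset.prod_congr rfl fun a _ => ?_
  by_cases h : a = 0
  · subst h; simp
  · simp [h]

end Aux

section Aux2

variable {F : Type*} [Field F] [Fintype F] {p : ℕ}

lemma pow_pk_bijective (hp : p.Prime) [CharP F p] (k : ℕ) :
    Function.Bijective (fun x : F => x ^ p ^ k) := by
  haveI : Fact p.Prime := ⟨hp⟩
  refine Finite.injective_iff_bijective.mp ?_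
  intro x y hxy
  have h : (x - y) ^ p ^ k = 0 := by
    rw [sub_pow_char_pow]; simpa [sub_eq_zero] using hxy
  have h2 := (pow_eq_zero_iff (pow_ne_zero k hp.ne_zero)).mp h
  exact sub_eq_zero.mp h2

lemma onePlusCX_pow_char_pow [CharP F p] (hp : p.Prime) (k : ℕ) (a : F) :
    (1 + Polynomial.C a * Polynomial.X) ^ p ^ k
      = 1 + Polynomial.C (a ^ p ^ k) * Polynomial.X ^ p ^ k := by
  haveI : Fact p.Prime := ⟨hp⟩
  haveI : CharP F[X] p := Polynomial.instCharP p
  haveI : ExpChar F[X] p := ExpChar.prime hp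
  rw [add_pow_char_pow, one_pow, mul_pow, ← map_pow]

lemma Qpoly_decomp [CharP F p] (hp : p.Prime) (k : ℕ) (e : F → ℕ) :
    Qpoly e = Qpoly (fun a => e a % p ^ k) *
      (Polynomial.expand F (p ^ k)) (∏ a : F,
        (1 + Polynomial.C (a ^ p ^ k) * Polynomial.X) ^ (e a / p ^ k)) := by
  rw [map_prod, Qpoly, Qpoly, ← Finset.prod_mul_distrib]
  refine Finset.prod_congr rfl fun a _ => ?_
  rw [map_pow, map_add, map_one, map_mul, Polynomial.expand_C, Polynomial.expand_X,
    ← onePlusCX_pow_char_pow hp, ← pow_mul, ← pow_add]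
  rw [Nat.mod_add_div (e a) (p ^ k)]

lemma coeff_mul_expand (m : ℕ) (hm : 0 < m) (g h : F[X]) (j : ℕ) :
    (g * (Polynomial.expand F m) h).coeff (j * m)
      = ∑ i ∈ Finset.range (j + 1), g.coeff ((j - i) * m) * h.coeff i := by
  rw [Polynomial.coeff_mul]
  have : ∀ x : ℕ × ℕ, x ∈ Finset.HasAntidiagonal.antidiagonal (j * m) →
      g.coeff x.1 * ((Polynomial.expand F m) h).coeff x.2
        = if m ∣ x.2 then g.coeff x.1 * h.coeff (x.2 / m) else 0 := by
    intro x _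
    rw [Polynomial.coeff_expand hm]
    split_ifs <;> simp [mul_ite]
  rw [Finset.sum_congr rfl this, ← Finset.sum_filter]
  refine Finset.sum_nbij' (fun x => x.2 / m) (fun i => ((j - i) * m, i * m)) ?_ ?_ ?_ ?_ ?_
  · intro x hx
    simp only [Finset.mem_filter, Finset.HasAntidiagonal.mem_antidiagonal] at hx
    simp only [Finset.mem_range]
    have : x.2 ≤ j * m := le_of_add_le_right hx.1.le
    have := Nat.div_le_div_right (c := m) this
    rw [Nat.mul_div_cancel _ hm] at this
    omega
  · intro i hi
    simp only [Finset.mem_range] at hi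
    simp only [Finset.mem_filter, Finset.HasAntidiagonal.mem_antidiagonal]
    constructor
    · rw [← Nat.add_mul]; congr 1; omega
    · exact ⟨i, by rw [mul_comm]⟩
  · rintro ⟨x1, x2⟩ hx
    simp only [Finset.mem_filter, Finset.HasAntidiagonal.mem_antidiagonal] at hx
    obtain ⟨h1, c, hc⟩ := hx
    subst hc
    simp only [Prod.mk.injEq, Nat.mul_div_cancel_left _ hm]
    have h2 : m * c ≤ m * j := by rw [mul_comm m j]; omega
    have hcj : c ≤ j := Nat.le_of_mul_le_mul_left h2 hm
    constructor
    · rw [Nat.sub_mul, mul_comm c m]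
      exact Nat.sub_eq_of_eq_add h1.symm
    · exact mul_comm c m
  · intro i hi
    simp only
    rw [Nat.mul_div_cancel _ hm]
  · rintro ⟨x1, x2⟩ hx
    simp only [Finset.mem_filter, Finset.HasAntidiagonal.mem_antidiagonal] at hx
    obtain ⟨h1, c, hc⟩ := hx
    subst hc
    simp only [Nat.mul_div_cancel_left _ hm]
    have h2 : m * c ≤ m * j := by rw [mul_comm m j]; omega
    have hcj : c ≤ j := Nat.le_of_mul_le_mul_left h2 hm
    congr 2
    rw [Nat.sub_mul, mul_comm c m]
    exact (Nat.sub_eq_of_eq_add h1.symm).symm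

lemma coeff_mul_expand_small (m : ℕ) (g h : F[X]) {t : ℕ} (ht : t < m) :
    (g * (Polynomial.expand F m) h).coeff t = g.coeff t * h.coeff 0 := by
  have hm : 0 < m := lt_of_le_of_lt (Nat.zero_le t) ht
  rw [Polynomial.coeff_mul]
  rw [Finset.sum_eq_single (t, 0)]
  · rw [Polynomial.coeff_expand hm]
    simp
  · intro b hb hne
    simp only [Finset.HasAntidiagonal.mem_antidiagonal] at hb
    rw [Polynomial.coeff_expand hm, if_neg, mul_zero]
    intro hdvd
    have hb2 : b.2 ≠ 0 := by
      intro h0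
      apply hne
      have : b.1 = t := by omega
      rw [← this, ← h0]
    have := Nat.le_of_dvd (Nat.pos_of_ne_zero hb2) hdvd
    omega
  · intro hmem
    exact absurd (Finset.HasAntidiagonal.mem_antidiagonal.mpr (by simp)) hmem

lemma triangle (m : ℕ) (hm : 0 < m) (g h h' : F[X]) (hg : g.coeff 0 = 1)
    (h0 : h.coeff 0 = h'.coeff 0) (J : ℕ)
    (hc : ∀ j, 1 ≤ j → j ≤ J →
      (g * (Polynomial.expand F m) h).coeff (j * m)
        = (g * (Polynomial.expand F m) h').coeff (j * m)) :
    ∀ j, j ≤ J → h.coeff j = h'.coeff j := by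
  intro j
  induction j using Nat.strong_induction_on with
  | _ j ih =>
    intro hjJ
    rcases Nat.eq_zero_or_pos j with rfl | hj
    · exact h0
    · have := hc j hj hjJ
      rw [coeff_mul_expand m hm, coeff_mul_expand m hm, Finset.sum_range_succ,
        Finset.sum_range_succ] at this
      have hsum : ∑ i ∈ Finset.range j, g.coeff ((j - i) * m) * h.coeff i
          = ∑ i ∈ Finset.range j, g.coeff ((j - i) * m) * h'.coeff i := by
        refine Finset.sum_congr rfl fun i hi => ?_
        rw [ih i (Finset.mem_range.mp hi) (le_trans (le_of_lt (Finset.mem_range.mp hi)) hjJ)]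
      rw [hsum, Nat.sub_self, zero_mul, hg, one_mul, one_mul] at this
      exact add_left_cancel this

end Aux2

section Newton

open MvPolynomial

variable {F : Type*} [Field F]

lemma aeval_esymm_coeff {σ : Type*} [Fintype σ] (u : σ → F) (j : ℕ) :
    (MvPolynomial.aeval u) (MvPolynomial.esymm σ F j)
      = (∏ i : σ, (1 + Polynomial.C (u i) * Polynomial.X)).coeff j := by
  classical
  rw [coeff_prod_one_add, MvPolynomial.esymm, map_sum]
  refine Finset.sum_congr rfl fun t _ => ?_
  rw [map_prod]
  simp

lemma aeval_psum {σ : Type*} [Fintype σ] (u : σ → F) (r : ℕ) :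
    (MvPolynomial.aeval u) (MvPolynomial.psum σ F r) = ∑ i : σ, (u i) ^ r := by
  rw [MvPolynomial.psum, map_sum]
  simp

lemma psum_val_congr {σ₁ σ₂ : Type*} [Fintype σ₁] [Fintype σ₂] (u₁ : σ₁ → F) (u₂ : σ₂ → F)
    (R : ℕ) (he : ∀ j, 1 ≤ j → j ≤ R →
      (MvPolynomial.aeval u₁) (MvPolynomial.esymm σ₁ F j)
        = (MvPolynomial.aeval u₂) (MvPolynomial.esymm σ₂ F j)) :
    ∀ r, 1 ≤ r → r ≤ R →
      (MvPolynomial.aeval u₁) (MvPolynomial.psum σ₁ F r)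
        = (MvPolynomial.aeval u₂) (MvPolynomial.psum σ₂ F r) := by
  intro r
  induction r using Nat.strong_induction_on with
  | _ r ih =>
    intro hr1 hrR
    classical
    rw [MvPolynomial.psum_eq_mul_esymm_sub_sum σ₁ F r hr1,
        MvPolynomial.psum_eq_mul_esymm_sub_sum σ₂ F r hr1]
    rw [map_sub, map_sub, map_mul, map_mul, map_mul, map_mul, map_pow, map_pow,
      map_neg, map_neg, map_one, map_one, map_natCast, map_natCast, map_sum, map_sum]
    congr 1
    · rw [he r hr1 hrR]
    · rw [Finset.sum_congr rfl]
      intro a ha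
      simp only [Finset.mem_filter, Finset.HasAntidiagonal.mem_antidiagonal, Set.mem_Ioo] at ha
      obtain ⟨hsum, h0a, har⟩ := ha
      rw [map_mul, map_mul, map_mul, map_mul, map_pow, map_pow, map_neg, map_neg,
        map_one, map_one]
      rw [he a.1 h0a (le_trans (le_of_lt har) hrR),
        ih a.2 (by omega) (by omega) (by omega)]

end Newton

section Base

variable {F : Type*} [Field F] [Fintype F] {p : ℕ}

lemma sigma_prod_eq_Qpoly (e : F → ℕ) :
    (∏ x : (a : F) × Fin (e a), (1 + Polynomial.C x.1 * Polynomial.X)) = Qpoly e := by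
  rw [Qpoly, ← Finset.univ_sigma_univ, Finset.prod_sigma]
  refine Finset.prod_congr rfl fun a _ => ?_
  simp

lemma sigma_psum_eq (e : F → ℕ) (r : ℕ) :
    ∑ x : (a : F) × Fin (e a), (x.1 : F) ^ r = ∑ a : F, (e a : F) * a ^ r := by
  rw [← Finset.univ_sigma_univ, Finset.sum_sigma]
  refine Finset.sum_congr rfl fun a _ => ?_
  simp [nsmul_eq_mul]

lemma geo_sum [DecidableEq F] (hF : (Fintype.card F : F) = 0) (x : F) :
    ∑ i ∈ Finset.range (Fintype.card F - 1), x ^ (i + 1)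
      = if x = 1 then -1 else 0 := by
  have hq : 1 ≤ Fintype.card F := Fintype.card_pos
  have h2 : Fintype.card F - 1 + 1 = Fintype.card F := by omega
  have hsplit : ∑ i ∈ Finset.range (Fintype.card F), x ^ i
      = (∑ i ∈ Finset.range (Fintype.card F - 1), x ^ (i + 1)) + x ^ 0 := by
    conv_lhs => rw [← h2]
    rw [Finset.sum_range_succ']
  by_cases h1 : x = 1
  · subst h1
    rw [if_pos rfl]
    simp only [one_pow, Finset.sum_const, Finset.card_range, nsmul_eq_mul,
      mul_one] at hsplit ⊢
    rw [hF] at hsplit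
    linear_combination -hsplit
  · rw [if_neg h1]
    rcases eq_or_ne x 0 with rfl | hx0
    · refine Finset.sum_eq_zero fun i _ => ?_
      exact zero_pow (Nat.succ_ne_zero i)
    · have hgeo := geom_sum_eq h1 (Fintype.card F)
      have hxq : x ^ Fintype.card F = x := FiniteField.pow_card x
      rw [hxq] at hgeo
      have : ∑ i ∈ Finset.range (Fintype.card F), x ^ i = 1 := by
        rw [hgeo, div_eq_one_iff_eq (sub_ne_zero.mpr h1)]
      rw [this, pow_zero] at hsplit
      linear_combination -hsplit

end Base

section BaseInv

variable {F : Type*} [Field F] [Fintype F] {p : ℕ}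

lemma base_cast_eq (e e' : F → ℕ)
    (hc : ∀ j, 1 ≤ j → j ≤ Fintype.card F - 1 → (Qpoly e).coeff j = (Qpoly e').coeff j) :
    ∀ a : F, a ≠ 0 → (e a : F) = (e' a : F) := by
  classical
  have hF : (Fintype.card F : F) = 0 := FiniteField.cast_card_eq_zero F
  have hes : ∀ j, 1 ≤ j → j ≤ Fintype.card F - 1 →
      (MvPolynomial.aeval (fun x : (a : F) × Fin (e a) => x.1))
        (MvPolynomial.esymm _ F j)
      = (MvPolynomial.aeval (fun x : (a : F) × Fin (e' a) => x.1))
        (MvPolynomial.esymm _ F j) := by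
    intro j h1 h2
    rw [aeval_esymm_coeff, aeval_esymm_coeff, sigma_prod_eq_Qpoly, sigma_prod_eq_Qpoly]
    exact hc j h1 h2
  have hps : ∀ r, 1 ≤ r → r ≤ Fintype.card F - 1 →
      ∑ a : F, (e a : F) * a ^ r = ∑ a : F, (e' a : F) * a ^ r := by
    intro r h1 h2
    have hmain := psum_val_congr _ _ _ hes r h1 h2
    rw [aeval_psum, aeval_psum, sigma_psum_eq, sigma_psum_eq] at hmain
    exact hmain
  intro a0 ha0
  set q := Fintype.card F with hqdef
  set D : F → F := fun a => (e a : F) - (e' a : F) with hD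
  have key : ∀ i ∈ Finset.range (q - 1),
      (∑ a : F, D a * a ^ (i + 1)) * (a0⁻¹) ^ (i + 1) = 0 := by
    intro i hi
    have hi' : i + 1 ≤ q - 1 := Finset.mem_range.mp hi
    have h := hps (i + 1) (by omega) hi'
    have hz : ∑ a : F, D a * a ^ (i + 1) = 0 := by
      simp only [hD, sub_mul]
      rw [Finset.sum_sub_distrib, h, sub_self]
    rw [hz, zero_mul]
  have key2 : ∑ a : F, D a * (∑ i ∈ Finset.range (q - 1), (a * a0⁻¹) ^ (i + 1)) = 0 := by
    have h0 : ∑ i ∈ Finset.range (q - 1), (∑ a : F, D a * a ^ (i + 1)) * (a0⁻¹) ^ (i + 1) = 0 :=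
      Finset.sum_eq_zero key
    calc ∑ a : F, D a * (∑ i ∈ Finset.range (q - 1), (a * a0⁻¹) ^ (i + 1))
        = ∑ a : F, ∑ i ∈ Finset.range (q - 1), (D a * a ^ (i + 1)) * (a0⁻¹) ^ (i + 1) := by
          refine Finset.sum_congr rfl fun a _ => ?_
          rw [Finset.mul_sum]
          refine Finset.sum_congr rfl fun i _ => ?_
          rw [mul_pow]; ring
      _ = ∑ i ∈ Finset.range (q - 1), ∑ a : F, (D a * a ^ (i + 1)) * (a0⁻¹) ^ (i + 1) :=
          Finset.sum_comm
      _ = ∑ i ∈ Finset.range (q - 1), (∑ a : F, D a * a ^ (i + 1)) * (a0⁻¹) ^ (i + 1) := by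
          refine Finset.sum_congr rfl fun i _ => ?_
          rw [Finset.sum_mul]
      _ = 0 := h0
  have key3 : ∑ a : F, D a * (if a = a0 then (-1 : F) else 0) = 0 := by
    calc ∑ a : F, D a * (if a = a0 then (-1 : F) else 0)
        = ∑ a : F, D a * (∑ i ∈ Finset.range (q - 1), (a * a0⁻¹) ^ (i + 1)) := by
          refine Finset.sum_congr rfl fun a _ => ?_
          congr 1
          symm
          rw [geo_sum hF]
          simp only [mul_inv_eq_one₀ ha0]
      _ = 0 := key2
  have key4 : -(D a0) = 0 := by
    rw [← key3]
    simp only [mul_ite, mul_neg_one, mul_zero]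
    rw [Finset.sum_ite_eq' Finset.univ a0 (fun a => -(D a))]
    simp
  have : D a0 = 0 := neg_eq_zero.mp key4
  exact sub_eq_zero.mp this

end BaseInv

section Lift

variable {F : Type*} [Field F] [Fintype F] {p : ℕ}

lemma lift_step [CharP F p] (hp : p.Prime) (k : ℕ) (e e' : F → ℕ)
    (hmod : ∀ a : F, e a % p ^ k = e' a % p ^ k)
    (hc : ∀ j, 1 ≤ j → j ≤ Fintype.card F - 1 →
      (Qpoly e).coeff (j * p ^ k) = (Qpoly e').coeff (j * p ^ k)) :
    ∀ a : F, a ≠ 0 → e a ≡ e' a [MOD p ^ (k + 1)] := by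
  classical
  have hm0 : 0 < p ^ k := pow_pos hp.pos k
  have hbij := pow_pk_bijective (F := F) hp k
  let φ : F ≃ F := Equiv.ofBijective _ hbij
  have hφ : ∀ a : F, φ a = a ^ p ^ k := fun a => rfl
  let dt : F → ℕ := fun b => e (φ.symm b) / p ^ k
  let dt' : F → ℕ := fun b => e' (φ.symm b) / p ^ k
  have hQd : ∀ (f : F → ℕ),
      (∏ a : F, (1 + Polynomial.C (a ^ p ^ k) * Polynomial.X) ^ (f a / p ^ k))
        = Qpoly (fun b => f (φ.symm b) / p ^ k) := by
    intro f
    rw [Qpoly, ← Equiv.prod_comp φ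
      (fun b => (1 + Polynomial.C b * Polynomial.X) ^ (f (φ.symm b) / p ^ k))]
    refine Finset.prod_congr rfl fun a _ => ?_
    have hsa : φ.symm (a ^ p ^ k) = a := φ.symm_apply_apply a
    rw [hφ a, hsa]
  have hdecomp : Qpoly e = Qpoly (fun a => e a % p ^ k)
      * (Polynomial.expand F (p ^ k)) (Qpoly dt) := by
    rw [Qpoly_decomp hp k e, hQd e]
  have hdecomp' : Qpoly e' = Qpoly (fun a => e a % p ^ k)
      * (Polynomial.expand F (p ^ k)) (Qpoly dt') := by
    rw [Qpoly_decomp hp k e', hQd e']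
    congr 1
    rw [Qpoly, Qpoly]
    refine Finset.prod_congr rfl fun a _ => ?_
    rw [hmod a]
  have htri : ∀ j, j ≤ Fintype.card F - 1 → (Qpoly dt).coeff j = (Qpoly dt').coeff j := by
    refine triangle (p ^ k) hm0 (Qpoly (fun a => e a % p ^ k)) (Qpoly dt) (Qpoly dt')
      (Qpoly_coeff_zero _) ?_ (Fintype.card F - 1) ?_
    · rw [Qpoly_coeff_zero, Qpoly_coeff_zero]
    · intro j hj1 hj2
      rw [← hdecomp, ← hdecomp']
      exact hc j hj1 hj2
  have hbase := base_cast_eq dt dt' (fun j h1 h2 => htri j h2)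
  intro a ha
  have hφa : φ a ≠ 0 := by
    rw [hφ a]
    exact pow_ne_zero _ ha
  have hdd : dt (φ a) ≡ dt' (φ a) [MOD p] :=
    (CharP.natCast_eq_natCast F p).mp (hbase (φ a) hφa)
  have hdd2 : e a / p ^ k ≡ e' a / p ^ k [MOD p] := by
    have h1 : dt (φ a) = e a / p ^ k := by
      show e (φ.symm (φ a)) / p ^ k = e a / p ^ k
      rw [Equiv.symm_apply_apply]
    have h2 : dt' (φ a) = e' a / p ^ k := by
      show e' (φ.symm (φ a)) / p ^ k = e' a / p ^ k
      rw [Equiv.symm_apply_apply]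
    rwa [h1, h2] at hdd
  have hmul : p ^ k * (e a / p ^ k) ≡ p ^ k * (e' a / p ^ k) [MOD p ^ k * p] :=
    hdd2.mul_left' (c := p ^ k)
  have goal : p ^ k * (e a / p ^ k) + e a % p ^ k
      ≡ p ^ k * (e' a / p ^ k) + e' a % p ^ k [MOD p ^ k * p] := by
    rw [hmod a]
    exact hmul.add_right _
  rw [Nat.div_add_mod, Nat.div_add_mod] at goal
  rwa [pow_succ]

end Lift

section MainAux

variable {F : Type*} [Field F] [Fintype F]

lemma prod_pow_coeff_zero (g : F → F) (d : F → ℕ) :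
    (∏ a : F, (1 + Polynomial.C (g a) * Polynomial.X) ^ (d a)).coeff 0 = 1 := by
  rw [Polynomial.coeff_zero_eq_eval_zero]
  simp [Polynomial.eval_prod]

end MainAux

open scoped Classical in
/-- Let `v, w ∈ 𝔽_q^n` and `t ∈ {1, …, n}`. If `s_{j·p^k}^{(n)}(v) = s_{j·p^k}^{(n)}(w)`
for all `j ∈ {1, …, q-1}` and `k ∈ {0, …, ⌊log_p t⌋}`, then
(i) for every `a ∈ 𝔽_q^×` the number of coordinates of `v` equal to `a` is congruent
mod `p^{⌊log_p t⌋ + 1}` to the number of coordinates of `w` equal to `a`, and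
(ii) `s_t^{(n)}(v) = s_t^{(n)}(w)`. -/
theorem stmt7 (p : ℕ) (hp : p.Prime) (F : Type*) [Field F] [Fintype F] [CharP F p]
    (n : ℕ) (v w : Fin n → F) (t : ℕ) (ht1 : 1 ≤ t) (htn : t ≤ n)
    (h : ∀ j : ℕ, 1 ≤ j → j ≤ Fintype.card F - 1 → ∀ k : ℕ, k ≤ Nat.log p t →
      esymmVal n (j * p ^ k) v = esymmVal n (j * p ^ k) w) :
    (∀ a : F, a ≠ 0 →
      (Finset.univ.filter fun i => v i = a).card ≡
      (Finset.univ.filter fun i => w i = a).card [MOD p ^ (Nat.log p t + 1)]) ∧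
    esymmVal n t v = esymmVal n t w := by
  classical
  set K := Nat.log p t with hK
  set e : F → ℕ := fun a => if a = 0 then 0 else (Finset.univ.filter fun i => v i = a).card
    with he
  set e' : F → ℕ := fun a => if a = 0 then 0 else (Finset.univ.filter fun i => w i = a).card
    with he'
  have hQe : Qpoly e = ∏ i, (1 + Polynomial.C (v i) * Polynomial.X) := by
    rw [prod_eq_Qpoly v]
    exact (Qpoly_zero_adjust _).symm
  have hQe' : Qpoly e' = ∏ i, (1 + Polynomial.C (w i) * Polynomial.X) := by
    rw [prod_eq_Qpoly w]
    exact (Qpoly_zero_adjust _).symm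
  have hcv : ∀ k, (Qpoly e).coeff k = esymmVal n k v := by
    intro k
    rw [hQe, coeff_prod_one_add]
    rfl
  have hcw : ∀ k, (Qpoly e').coeff k = esymmVal n k w := by
    intro k
    rw [hQe', coeff_prod_one_add]
    rfl
  have hcoef : ∀ k, k ≤ K → ∀ j, 1 ≤ j → j ≤ Fintype.card F - 1 →
      (Qpoly e).coeff (j * p ^ k) = (Qpoly e').coeff (j * p ^ k) := by
    intro k hk j hj1 hj2
    rw [hcv, hcw]
    exact h j hj1 hj2 k hk
  have hcnt : ∀ k, k ≤ K → ∀ a : F, a ≠ 0 → e a ≡ e' a [MOD p ^ (k + 1)] := by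
    intro k
    induction k with
    | zero =>
      intro hk
      refine lift_step hp 0 e e' (fun a => by simp [Nat.mod_one]) ?_
      exact hcoef 0 hk
    | succ k ih =>
      intro hk
      refine lift_step hp (k + 1) e e' ?_ (hcoef (k + 1) hk)
      intro a
      rcases eq_or_ne a 0 with rfl | ha
      · simp [he, he']
      · exact ih (le_trans (Nat.le_succ k) hk) a ha
  have hcntK := hcnt K le_rfl
  constructor
  · intro a ha
    have := hcntK a ha
    simpa only [he, he', if_neg ha] using this
  · have htM : t < p ^ (K + 1) := Nat.lt_pow_succ_log_self hp.one_lt t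
    have hmodM : ∀ a : F, e a % p ^ (K + 1) = e' a % p ^ (K + 1) := by
      intro a
      rcases eq_or_ne a 0 with rfl | ha
      · simp [he, he']
      · exact hcntK a ha
    rw [← hcv t, ← hcw t, Qpoly_decomp hp (K + 1) e, Qpoly_decomp hp (K + 1) e',
      coeff_mul_expand_small _ _ _ htM, coeff_mul_expand_small _ _ _ htM,
      prod_pow_coeff_zero, prod_pow_coeff_zero, mul_one, mul_one]
    have heq : (fun a : F => e a % p ^ (K + 1)) = fun a => e' a % p ^ (K + 1) :=
      funext hmodM
    rw [heq]
end

section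
/- Let F be a field and k ≤ n positive integers. If the elementary symmetric polynomial s_k^{(n)} is irreplaceable over F, then for every m ≥ n and every field K containing F as a subfield, the elementary symmetric polynomial s_k^{(m)} is irreplaceable over K. -/
/-- Two vectors `v, w ∈ F^n` lie in the same `S_n`-orbit. -/
def SameOrbit {F : Type*} (n : ℕ) (v w : Fin n → F) : Prop :=
  ∃ π : Equiv.Perm (Fin n), ∀ i, w i = v (π i)

/-- The family `{s_i^{(n)} : i ∈ A}` separates the `S_n`-orbits in `F^n`. -/
def Separates (F : Type*) [CommSemiring F] (n : ℕ) (A : Set ℕ) : Prop :=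
  ∀ v w : Fin n → F, ¬ SameOrbit n v w → ∃ i ∈ A, esymmVal n i v ≠ esymmVal n i w

/-- `s_k^{(n)}` is irreplaceable over `F`: every subset `A ⊆ {1, …, n}` such that
`{s_i^{(n)} : i ∈ A}` separates the `S_n`-orbits in `F^n` contains `k`. -/
def Irreplaceable (F : Type*) [CommSemiring F] (n k : ℕ) : Prop :=
  ∀ A : Set ℕ, A ⊆ Set.Icc 1 n → Separates F n A → k ∈ A

/-! ### Auxiliary lemmas -/

/-- Multiset of values of a tuple on `Fin (n+1)` decomposes as a cons. -/
lemma map_univ_val_succ {F : Type*} {n : ℕ} (f : Fin (n + 1) → F) :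
    Multiset.map f (Finset.univ : Finset (Fin (n + 1))).val =
      f 0 ::ₘ Multiset.map (f ∘ Fin.succ) (Finset.univ : Finset (Fin n)).val := by
  rw [Fin.univ_succ, Finset.cons_val, Multiset.map_cons, Finset.map_val, Multiset.map_map]
  rfl

/-- If two tuples have the same multiset of values, they are in the same orbit. -/
lemma exists_perm_of_map_eq {F : Type*} :
    ∀ {n : ℕ} (v w : Fin n → F),
      Multiset.map w (Finset.univ : Finset (Fin n)).val =
        Multiset.map v (Finset.univ : Finset (Fin n)).val →
      ∃ π : Equiv.Perm (Fin n), ∀ i, w i = v (π i) := by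
  intro n
  induction n with
  | zero => exact fun v w _ => ⟨Equiv.refl _, fun i => i.elim0⟩
  | succ n ih =>
    intro v w hmap
    have h0 : w 0 ∈ Multiset.map v (Finset.univ : Finset (Fin (n + 1))).val := by
      rw [← hmap]
      exact Multiset.mem_map_of_mem w (by rw [Finset.mem_val]; exact Finset.mem_univ 0)
    obtain ⟨j, -, hj⟩ := Multiset.mem_map.1 h0
    set v' : Fin (n + 1) → F := v ∘ (Equiv.swap 0 j) with hv'
    have hv'0 : v' 0 = w 0 := by
      simp only [hv', Function.comp_apply, Equiv.swap_apply_left]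
      exact hj
    have hmapv' : Multiset.map v' (Finset.univ : Finset (Fin (n + 1))).val =
        Multiset.map v (Finset.univ : Finset (Fin (n + 1))).val := by
      rw [hv']
      rw [← Multiset.map_map v (Equiv.swap 0 j)]
      rw [Multiset.map_univ_val_equiv]
    have hmap' : Multiset.map w (Finset.univ : Finset (Fin (n + 1))).val =
        Multiset.map v' (Finset.univ : Finset (Fin (n + 1))).val := by
      rw [hmapv', hmap]
    rw [map_univ_val_succ, map_univ_val_succ, hv'0] at hmap'
    have htail := (Multiset.cons_inj_right (w 0)).1 hmap'
    obtain ⟨π', hπ'⟩ := ih (v' ∘ Fin.succ) (w ∘ Fin.succ) htail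
    refine ⟨(Equiv.Perm.decomposeFin.symm (0, π')).trans (Equiv.swap 0 j), fun i => ?_⟩
    refine Fin.cases ?_ (fun i' => ?_) i
    · simp [Equiv.swap_apply_left, hj]
    · have := hπ' i'
      simp only [Function.comp_apply, hv'] at this
      simpa [Equiv.Perm.decomposeFin_symm_apply_succ, Equiv.swap_self] using this

lemma sameOrbit_iff_map_eq {F : Type*} {n : ℕ} (v w : Fin n → F) :
    SameOrbit n v w ↔
      Multiset.map w (Finset.univ : Finset (Fin n)).val =
        Multiset.map v (Finset.univ : Finset (Fin n)).val := by
  constructor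
  · rintro ⟨π, hπ⟩
    have : w = v ∘ π := funext hπ
    rw [this, ← Multiset.map_map v π, Multiset.map_univ_val_equiv]
  · exact exists_perm_of_map_eq v w

lemma esymmVal_eq_multiset_esymm {F : Type*} [CommSemiring F] (n k : ℕ) (v : Fin n → F) :
    esymmVal n k v = (Multiset.map v (Finset.univ : Finset (Fin n)).val).esymm k :=
  (Finset.esymm_map_val v Finset.univ k).symm

lemma esymm_cons_zero {F : Type*} [CommSemiring F] {k : ℕ} (hk : 1 ≤ k) (s : Multiset F) :
    (0 ::ₘ s).esymm k = s.esymm k := by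
  obtain ⟨k, rfl⟩ := Nat.exists_eq_add_of_le hk
  rw [add_comm]
  rw [Multiset.esymm, Multiset.powersetCard_cons, Multiset.map_add, Multiset.sum_add,
    Multiset.map_map]
  have : ((Multiset.powersetCard k s).map ((fun t => t.prod) ∘ Multiset.cons 0)).sum = 0 := by
    apply Multiset.sum_eq_zero
    intro x hx
    obtain ⟨t, -, rfl⟩ := Multiset.mem_map.1 hx
    simp
  rw [this, add_zero, Multiset.esymm]

lemma esymm_add_replicate_zero {F : Type*} [CommSemiring F] {k : ℕ} (hk : 1 ≤ k)
    (s : Multiset F) (r : ℕ) :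
    (s + Multiset.replicate r 0).esymm k = s.esymm k := by
  induction r with
  | zero => simp
  | succ r ihr =>
    rw [Multiset.replicate_succ, Multiset.add_cons, esymm_cons_zero hk, ihr]

lemma esymmVal_eq_zero_of_lt {F : Type*} [CommSemiring F] {n k : ℕ} (h : n < k)
    (v : Fin n → F) : esymmVal n k v = 0 := by
  rw [esymmVal]
  rw [Finset.powersetCard_eq_empty.2 (by simpa using h)]
  simp

lemma esymmVal_ringHom {F K : Type*} [CommSemiring F] [CommSemiring K] (φ : F →+* K)
    (n k : ℕ) (v : Fin n → F) :
    esymmVal n k (fun i => φ (v i)) = φ (esymmVal n k v) := by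
  simp [esymmVal, map_sum, map_prod]

/-- If `s_k^{(n)}` is irreplaceable over `F`, then `s_k^{(m)}` is irreplaceable over
every overfield `K` of `F`, for every `m ≥ n`. -/
theorem stmt9 (F K : Type*) [Field F] [Field K] [Algebra F K]
    (n k : ℕ) (hk : 1 ≤ k) (hkn : k ≤ n)
    (h : Irreplaceable F n k) :
    ∀ m : ℕ, n ≤ m → Irreplaceable K m k := by
  intro m hnm A hA hsep
  set φ := algebraMap F K with hφdef
  have hφ : Function.Injective φ := (algebraMap F K).injective
  -- key identity: the padded vector has the same esymm values
  have hpad : ∀ (u : Fin n → F) (i : ℕ), 1 ≤ i →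
      esymmVal m i (fun j : Fin m => if hj : (j : ℕ) < n then φ (u ⟨j, hj⟩) else 0) =
        φ (esymmVal n i u) := by
    intro u i hi
    set pu : Fin m → K := fun j : Fin m => if hj : (j : ℕ) < n then φ (u ⟨j, hj⟩) else 0
      with hpu
    have hcast : n + (m - n) = m := Nat.add_sub_cancel' hnm
    have hmultiset :
        Multiset.map pu (Finset.univ : Finset (Fin m)).val =
          Multiset.map (fun i => φ (u i)) (Finset.univ : Finset (Fin n)).val +
            Multiset.replicate (m - n) 0 := by
      have he : Multiset.map (⇑((finSumFinEquiv.trans (finCongr hcast)) :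
          Fin n ⊕ Fin (m - n) ≃ Fin m))
          (Finset.univ : Finset (Fin n ⊕ Fin (m - n))).val =
          (Finset.univ : Finset (Fin m)).val :=
        Multiset.map_univ_val_equiv _
      rw [← he, Multiset.map_map]
      rw [← Finset.univ_disjSum_univ, Finset.val_disjSum, Multiset.disjSum,
        Multiset.map_add, Multiset.map_map, Multiset.map_map]
      congr 1
      · apply Multiset.map_congr rfl
        intro x _
        simp only [Function.comp_apply, Equiv.trans_apply, finSumFinEquiv_apply_left,
          finCongr_apply, hpu]
        rw [dif_pos (by simp [Fin.is_lt])]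
        congr 1
      · rw [show Multiset.replicate (m - n) (0 : K) =
            Multiset.map (Function.const (Fin (m - n)) (0 : K))
              (Finset.univ : Finset (Fin (m - n))).val by
          rw [Multiset.map_const]
          simp]
        apply Multiset.map_congr rfl
        intro x _
        simp only [Function.comp_apply, Equiv.trans_apply, finSumFinEquiv_apply_right,
          finCongr_apply, hpu]
        rw [dif_neg (by simp)]
        rfl
    rw [esymmVal_eq_multiset_esymm, hmultiset, esymm_add_replicate_zero hi,
      ← esymmVal_eq_multiset_esymm, esymmVal_ringHom]
  have hk' : k ∈ A ∩ Set.Icc 1 n := by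
    refine h (A ∩ Set.Icc 1 n) Set.inter_subset_right ?_
    intro v w hvw
    set v' : Fin m → K := fun j : Fin m => if hj : (j : ℕ) < n then φ (v ⟨j, hj⟩) else 0
    set w' : Fin m → K := fun j : Fin m => if hj : (j : ℕ) < n then φ (w ⟨j, hj⟩) else 0
    have hvw' : ¬ SameOrbit m v' w' := by
      intro hs
      apply hvw
      rw [sameOrbit_iff_map_eq] at hs ⊢
      -- compute multisets of padded vectors
      have hv1 : esymmVal m 1 v' = φ (esymmVal n 1 v) := hpad v 1 le_rfl
      -- use the multiset decomposition directly
      -- reconstruct it as in hpad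
      have hcast : n + (m - n) = m := Nat.add_sub_cancel' hnm
      have hmul : ∀ u : Fin n → F,
          Multiset.map (fun j : Fin m =>
              if hj : (j : ℕ) < n then φ (u ⟨j, hj⟩) else 0)
            (Finset.univ : Finset (Fin m)).val =
            Multiset.map (fun i => φ (u i)) (Finset.univ : Finset (Fin n)).val +
              Multiset.replicate (m - n) 0 := by
        intro u
        have he : Multiset.map (⇑((finSumFinEquiv.trans (finCongr hcast)) :
            Fin n ⊕ Fin (m - n) ≃ Fin m))
            (Finset.univ : Finset (Fin n ⊕ Fin (m - n))).val =
            (Finset.univ : Finset (Fin m)).val :=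
          Multiset.map_univ_val_equiv _
        rw [← he, Multiset.map_map]
        rw [← Finset.univ_disjSum_univ, Finset.val_disjSum, Multiset.disjSum,
          Multiset.map_add, Multiset.map_map, Multiset.map_map]
        congr 1
        · apply Multiset.map_congr rfl
          intro x _
          simp only [Function.comp_apply, Equiv.trans_apply, finSumFinEquiv_apply_left,
            finCongr_apply]
          rw [dif_pos (by simp [Fin.is_lt])]
          congr 1
        · rw [show Multiset.replicate (m - n) (0 : K) =
              Multiset.map (Function.const (Fin (m - n)) (0 : K))
                (Finset.univ : Finset (Fin (m - n))).val by
            rw [Multiset.map_const]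
            simp]
          apply Multiset.map_congr rfl
          intro x _
          simp only [Function.comp_apply, Equiv.trans_apply, finSumFinEquiv_apply_right,
            finCongr_apply]
          rw [dif_neg (by simp)]
          rfl
      rw [hmul v, hmul w] at hs
      have hcancel :
          Multiset.map (fun i => φ (w i)) (Finset.univ : Finset (Fin n)).val =
            Multiset.map (fun i => φ (v i)) (Finset.univ : Finset (Fin n)).val :=
        add_right_cancel hs
      have : Multiset.map φ (Multiset.map w (Finset.univ : Finset (Fin n)).val) =
          Multiset.map φ (Multiset.map v (Finset.univ : Finset (Fin n)).val) := by
        rw [Multiset.map_map, Multiset.map_map]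
        exact hcancel
      exact Multiset.map_injective hφ this
    obtain ⟨i, hiA, hne⟩ := hsep v' w' hvw'
    have h1i : 1 ≤ i := (hA hiA).1
    have hvalv : esymmVal m i v' = φ (esymmVal n i v) := hpad v i h1i
    have hvalw : esymmVal m i w' = φ (esymmVal n i w) := hpad w i h1i
    have hin : i ≤ n := by
      by_contra hgt
      push_neg at hgt
      apply hne
      rw [hvalv, hvalw, esymmVal_eq_zero_of_lt hgt, esymmVal_eq_zero_of_lt hgt]
    refine ⟨i, ⟨hiA, h1i, hin⟩, fun he => hne ?_⟩
    rw [hvalv, hvalw, he]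
  exact hk'.1
end
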